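/- Let h : ℝ → ℂ be measurable with |h(x)| ≤ C e^{−δ|x|} for some C, δ > 0, and suppose ∫ x^n h(x) dx = 0 for all n ∈ ℕ₀. Then h = 0 almost everywhere. -/

import Mathlib

/-!
All twisted moments `∫ xⁿ e^{itx} h(x) dx` vanish: for `t = 0` this is the hypothesis, and if
they vanish at `t` they vanish at `t + s` for `|s| < δ`, by expanding `e^{isx}` in its power series
and integrating termwise (the exponential decay of `h` makes the termwise bounds summable). Taking
`n = 0`, the Fourier transform of `h` vanishes identically, and an integrable function with zero
Fourier transform is zero almost everywhere.
-/

open MeasureTheory Complex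
open scoped Nat FourierTransform SchwartzMap

theorem MeasureTheory.Integrable.ae_eq_zero_of_fourier_eq_zero {V F : Type*} [NormedAddCommGroup V]
    [InnerProductSpace ℝ V] [FiniteDimensional ℝ V] [MeasurableSpace V] [BorelSpace V]
    [NormedAddCommGroup F] [NormedSpace ℂ F] [CompleteSpace F] {f : V → F}
    (hf : Integrable f) (hFf : 𝓕 f = 0) : ∀ᵐ x, f x = 0 := by
  refine ae_eq_zero_of_integral_contDiff_smul_eq_zero hf.locallyIntegrable fun g hg hgs => ?_
  -- Write the test function `g` as `𝓕 (𝓕⁻ G)` and move `𝓕` onto `f`.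
  let G : 𝓢(V, ℂ) :=
    (hgs.comp_left ofReal_zero).toSchwartzMap (ofRealCLM.contDiff.comp hg)
  have hG : ∀ x, g x • f x = 𝓕 (⇑(𝓕⁻ G : 𝓢(V, ℂ))) x • f x := fun x => by
    rw [← SchwartzMap.fourier_coe, FourierTransform.fourier_fourierInv_eq]
    exact (coe_smul _ _).symm
  have key := VectorFourier.integral_fourierIntegral_smul_eq_flip (L := innerₗ V)
      (μ := volume) (ν := volume) Real.continuous_fourierChar continuous_inner
      (𝓕⁻ G).integrable hf
  rw [flip_innerₗ] at key
  change ∫ ξ, 𝓕 (⇑(𝓕⁻ G : 𝓢(V, ℂ))) ξ • f ξ = ∫ x, (𝓕⁻ G) x • 𝓕 f x at key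
  simpa [hG, hFf] using key

theorem integral_abs_pow_mul_exp_neg_mul_abs {δ : ℝ} (hδ : 0 < δ) (k : ℕ) :
    ∫ x : ℝ, |x| ^ k * Real.exp (-δ * |x|) = 2 * k ! / δ ^ (k + 1) := by
  have hGamma := Real.integral_rpow_mul_exp_neg_mul_Ioi (a := k + 1) (by positivity) hδ
  rw [add_sub_cancel_right, Real.Gamma_nat_eq_factorial, ← Nat.cast_add_one, Real.rpow_natCast,
    one_div, inv_pow] at hGamma
  simp_rw [Real.rpow_natCast, ← neg_mul] at hGamma
  rw [integral_comp_abs (f := fun x => x ^ k * Real.exp (-δ * x)), hGamma]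
  ring

theorem integrable_abs_pow_mul_exp_neg_mul_abs {δ : ℝ} (hδ : 0 < δ) (k : ℕ) :
    Integrable fun x : ℝ => |x| ^ k * Real.exp (-δ * |x|) :=
  Integrable.of_integral_ne_zero <| by
    rw [integral_abs_pow_mul_exp_neg_mul_abs hδ k]; positivity

section ExponentialDecay

variable {g : ℝ → ℂ} {C δ : ℝ}

theorem norm_ofReal_pow_mul_le (hbound : ∀ x, ‖g x‖ ≤ C * Real.exp (-δ * |x|)) (k : ℕ) (x : ℝ) :
    ‖(x : ℂ) ^ k * g x‖ ≤ C * (|x| ^ k * Real.exp (-δ * |x|)) := by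
  rw [norm_mul, norm_pow, norm_real, Real.norm_eq_abs, mul_left_comm]
  gcongr
  exact hbound x

theorem integrable_ofReal_pow_mul (hg : AEStronglyMeasurable g) (hδ : 0 < δ)
    (hbound : ∀ x, ‖g x‖ ≤ C * Real.exp (-δ * |x|)) (k : ℕ) :
    Integrable fun x : ℝ => (x : ℂ) ^ k * g x :=
  ((integrable_abs_pow_mul_exp_neg_mul_abs hδ k).const_mul C).mono'
    ((continuous_ofReal.pow k).aestronglyMeasurable.mul hg)
    (.of_forall (norm_ofReal_pow_mul_le hbound k))

theorem integral_norm_ofReal_pow_mul_le (hg : AEStronglyMeasurable g) (hδ : 0 < δ)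
    (hbound : ∀ x, ‖g x‖ ≤ C * Real.exp (-δ * |x|)) (k : ℕ) :
    ∫ x : ℝ, ‖(x : ℂ) ^ k * g x‖ ≤ C * (2 * k ! / δ ^ (k + 1)) := by
  rw [← integral_abs_pow_mul_exp_neg_mul_abs hδ k, ← integral_const_mul]
  exact integral_mono (integrable_ofReal_pow_mul hg hδ hbound k).norm
    ((integrable_abs_pow_mul_exp_neg_mul_abs hδ k).const_mul C) (norm_ofReal_pow_mul_le hbound k)

theorem norm_exp_ofReal_mul_ofReal_mul_I (s x : ℝ) : ‖exp (s * x * I)‖ = 1 := by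
  rw [← ofReal_mul, norm_exp_ofReal_mul_I]

theorem aestronglyMeasurable_exp_mul (hg : AEStronglyMeasurable g) (s : ℝ) :
    AEStronglyMeasurable fun x : ℝ => exp (s * x * I) * g x :=
  (by fun_prop : Continuous fun x : ℝ => exp (s * x * I)).aestronglyMeasurable.mul hg

theorem norm_exp_mul_le (hbound : ∀ x, ‖g x‖ ≤ C * Real.exp (-δ * |x|)) (s x : ℝ) :
    ‖exp (s * x * I) * g x‖ ≤ C * Real.exp (-δ * |x|) := by
  rw [norm_mul, norm_exp_ofReal_mul_ofReal_mul_I, one_mul]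
  exact hbound x

theorem hasSum_pow_mul_exp_mul (g : ℝ → ℂ) (s x : ℝ) (n : ℕ) :
    HasSum (fun m : ℕ => ((s : ℂ) * I) ^ m / m ! * ((x : ℂ) ^ (n + m) * g x))
      ((x : ℂ) ^ n * (exp (s * x * I) * g x)) := by
  rw [mul_left_comm, exp_eq_exp_ℂ]
  refine ((NormedSpace.expSeries_div_hasSum_exp ((s : ℂ) * x * I)).mul_right
    ((x : ℂ) ^ n * g x)).congr_fun fun m => ?_
  rw [pow_add]
  ring

theorem integral_pow_mul_exp_mul_eq_zero (hg : AEStronglyMeasurable g) (hδ : 0 < δ)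
    (hbound : ∀ x, ‖g x‖ ≤ C * Real.exp (-δ * |x|))
    (hmom : ∀ n : ℕ, ∫ x : ℝ, (x : ℂ) ^ n * g x = 0) {s : ℝ} (hs : |s| < δ) (n : ℕ) :
    ∫ x : ℝ, (x : ℂ) ^ n * (exp (s * x * I) * g x) = 0 := by
  set F : ℕ → ℝ → ℂ := fun m x => ((s : ℂ) * I) ^ m / m ! * ((x : ℂ) ^ (n + m) * g x)
  have hF_int (m : ℕ) : Integrable (F m) :=
    (integrable_ofReal_pow_mul hg hδ hbound (n + m)).const_mul _
  -- Since `(n + m)! / m! = n! * (m + n).choose n`, these bounds form a negative binomial series.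
  have hF_norm (m : ℕ) : ∫ x, ‖F m x‖ ≤
      2 * C * n ! / δ ^ (n + 1) * ((m + n).choose n * (|s| / δ) ^ m) := by
    have hfac := Nat.add_choose_mul_factorial_mul_factorial m n
    calc ∫ x, ‖F m x‖ = |s| ^ m / m ! * ∫ x : ℝ, ‖(x : ℂ) ^ (n + m) * g x‖ := by
          simp only [F, norm_mul, norm_div, norm_pow, norm_I, norm_real, Real.norm_eq_abs,
            norm_natCast, mul_one, integral_const_mul]
      _ ≤ |s| ^ m / m ! * (C * (2 * (n + m) ! / δ ^ (n + m + 1))) := by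
          gcongr
          exact integral_norm_ofReal_pow_mul_le hg hδ hbound (n + m)
      _ = _ := by
          rw [add_comm n m, ← hfac, div_pow]
          push_cast
          field_simp
          ring
  have hr : ‖|s| / δ‖ < 1 := by
    rwa [Real.norm_eq_abs, abs_div, abs_abs, abs_of_pos hδ, div_lt_one hδ]
  have hsum : Summable fun m => ∫ x, ‖F m x‖ :=
    .of_nonneg_of_le (fun m => integral_nonneg fun x => norm_nonneg _) hF_norm
      ((summable_choose_mul_geometric_of_norm_lt_one n hr).mul_left _)
  calc ∫ x : ℝ, (x : ℂ) ^ n * (exp (s * x * I) * g x)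
      = ∫ x, ∑' m, F m x :=
        integral_congr_ae (.of_forall fun x => (hasSum_pow_mul_exp_mul g s x n).tsum_eq.symm)
    _ = ∑' m, ∫ x, F m x := (integral_tsum_of_summable_integral_norm hF_int hsum).symm
    _ = 0 := by simp [F, integral_const_mul, hmom]

theorem integral_pow_mul_exp_mul_eq_zero_of_moments (hg : AEStronglyMeasurable g) (hδ : 0 < δ)
    (hbound : ∀ x, ‖g x‖ ≤ C * Real.exp (-δ * |x|))
    (hmom : ∀ n : ℕ, ∫ x : ℝ, (x : ℂ) ^ n * g x = 0) (t : ℝ) (n : ℕ) :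
    ∫ x : ℝ, (x : ℂ) ^ n * (exp (t * x * I) * g x) = 0 := by
  obtain ⟨N, hN⟩ := exists_nat_gt (|t| / δ)
  have hN0 : (0 : ℝ) < N := (div_nonneg (abs_nonneg t) hδ.le).trans_lt hN
  have hs : |t / N| < δ := by
    rwa [abs_div, Nat.abs_cast, div_lt_iff₀ hN0, mul_comm, ← div_lt_iff₀ hδ]
  have key (j : ℕ) (n : ℕ) :
      ∫ x : ℝ, (x : ℂ) ^ n * (exp ((j * (t / N) : ℝ) * x * I) * g x) = 0 := by
    induction j generalizing n with
    | zero => simpa using hmom n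
    | succ j ih =>
      have step := integral_pow_mul_exp_mul_eq_zero (aestronglyMeasurable_exp_mul hg _) hδ
        (norm_exp_mul_le hbound _) ih hs n
      rw [← step]
      congr with x
      rw [← mul_assoc (exp _), ← exp_add]
      push_cast
      ring_nf
  simpa [mul_div_cancel₀ t hN0.ne'] using key N n

theorem fourier_eq_zero_of_moments (hg : AEStronglyMeasurable g) (hδ : 0 < δ)
    (hbound : ∀ x, ‖g x‖ ≤ C * Real.exp (-δ * |x|))
    (hmom : ∀ n : ℕ, ∫ x : ℝ, (x : ℂ) ^ n * g x = 0) : 𝓕 g = 0 := by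
  ext ξ
  rw [Real.fourier_real_eq_integral_exp_smul, Pi.zero_apply,
    ← integral_pow_mul_exp_mul_eq_zero_of_moments hg hδ hbound hmom (-2 * Real.pi * ξ) 0]
  congr with x
  rw [pow_zero, one_mul, smul_eq_mul]
  push_cast
  ring_nf

end ExponentialDecay

theorem stmt10_general (h : ℝ → ℂ) (hm : Measurable h) (C δ : ℝ) (hδ : 0 < δ)
    (hbound : ∀ x : ℝ, ‖h x‖ ≤ C * Real.exp (-δ * |x|))
    (hmom : ∀ n : ℕ, ∫ x : ℝ, (x : ℂ) ^ n * h x = 0) :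
    ∀ᵐ x : ℝ, h x = 0 := by
  have hint : Integrable h := by
    simpa using integrable_ofReal_pow_mul hm.aestronglyMeasurable hδ hbound 0
  exact hint.ae_eq_zero_of_fourier_eq_zero
    (fourier_eq_zero_of_moments hm.aestronglyMeasurable hδ hbound hmom)

/-- If `h : ℝ → ℂ` is measurable with `|h(x)| ≤ C e^{-δ|x|}` and all moments
`∫ xⁿ h(x) dx` vanish, then `h = 0` almost everywhere. -/
theorem stmt10 (h : ℝ → ℂ) (hm : Measurable h) (C δ : ℝ) (hC : 0 < C) (hδ : 0 < δ)
    (hbound : ∀ x : ℝ, ‖h x‖ ≤ C * Real.exp (-δ * |x|))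
    (hmom : ∀ n : ℕ, ∫ x : ℝ, (x : ℂ) ^ n * h x = 0) :
    ∀ᵐ x : ℝ, h x = 0 :=
  stmt10_general h hm C δ hδ hbound hmom
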